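/- Let (Z, E) be a reflexive graph whose relation E is antisymmetric, and suppose the concept lattice of the associated polarity (Z, Z, I_{Eᶜ}) satisfies the completely distributive law. For u ∈ Z define κ(u) := ⨆ {w_s | w ∈ Z, ¬(u_s ≤ w_s)}. Then κ(u) is completely meet-irreducible: for every set S of concepts with sInf S = κ(u), one has κ(u) ∈ S. -/

import Mathlib

open Set

universe u v

/-- The object concept `z_s = ({z}^{↑↓}, {z}^↑)`. -/
def objectConcept {A X : Type*} (I : A → X → Prop) (a : A) : Concept A X I where
  extent := lowerPolar I (upperPolar I {a})
  intent := upperPolar I {a}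
  upperPolar_extent := upperPolar_lowerPolar_upperPolar I {a}
  lowerPolar_intent := rfl

/-!
`κ(u)` is the largest concept not above `u_s` (every concept is the join of the object concepts
below it), so it is completely meet-irreducible as soon as `u_s ≰ κ(u)`. If `u_s ≤ κ(u)`,
reflexivity yields some `w` with `u_s ≰ w_s` and `w E u`; antisymmetry then gives
`u_s ≤ w_s ⊔ u_r`, and distributivity writes `u_s` as the join of `u_s ⊓ w_s` and `u_s ⊓ u_r`,
both strictly below `u_s`. But by antisymmetry every concept strictly below `u_s` has `u` in its
intent, so `u_s` is not a join of such concepts.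
-/

theorem inf_sup_left_le_of_iInf_iSup_eq {L : Type*} [CompleteLattice L]
    (h : ∀ (ι : Type u) (κ : ι → Type v) (f : (i : ι) → κ i → L),
      ⨅ i, ⨆ j, f i j = ⨆ g : (i : ι) → κ i, ⨅ i, f i (g i))
    (a b c : L) : a ⊓ (b ⊔ c) ≤ a ⊓ b ⊔ a ⊓ c := by
  let f : ULift.{u} Bool → ULift.{v} Bool → L := fun i j => cond i.down (cond j.down b c) a
  calc a ⊓ (b ⊔ c) ≤ ⨅ i, ⨆ j, f i j := by
        refine le_iInf fun ⟨i⟩ => ?_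
        cases i
        · exact le_iSup_of_le ⟨false⟩ inf_le_left
        · exact inf_le_right.trans (sup_le (le_iSup_of_le ⟨true⟩ le_rfl)
            (le_iSup_of_le ⟨false⟩ le_rfl))
    _ = ⨆ g : ULift.{u} Bool → ULift.{v} Bool, ⨅ i, f i (g i) := h _ _ f
    _ ≤ a ⊓ b ⊔ a ⊓ c := by
        refine iSup_le fun g => le_trans (le_inf (iInf_le _ ⟨false⟩) (iInf_le _ ⟨true⟩)) ?_
        rcases g ⟨true⟩ with ⟨_ | _⟩
        · exact le_sup_right
        · exact le_sup_left

theorem mem_of_sInf_eq_of_isGreatest {L : Type*} [CompleteLattice L] {p k : L} {S : Set L}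
    (hk : IsGreatest {c | ¬ p ≤ c} k) (hS : sInf S = k) : k ∈ S := by
  by_contra hkS
  refine hk.1 (hS ▸ le_sInf fun c hc => ?_)
  by_contra hpc
  exact hkS (le_antisymm (hk.2 hpc) (hS ▸ sInf_le hc) ▸ hc)

section Polarity

variable {A X : Type*} {I : A → X → Prop}

theorem objectConcept_le_iff {a : A} {c : Concept A X I} :
    objectConcept I a ≤ c ↔ a ∈ c.extent :=
  Concept.ofObjects_le_iff.trans singleton_subset_iff

theorem le_of_forall_objectConcept_le {c d : Concept A X I}
    (h : ∀ a ∈ c.extent, objectConcept I a ≤ d) : c ≤ d :=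
  Concept.extent_subset_extent_iff.1 fun a ha => objectConcept_le_iff.1 (h a ha)

variable (I) in
def kappa (u : A) : Concept A X I :=
  sSup {d | ∃ w, d = objectConcept I w ∧ ¬ objectConcept I u ≤ objectConcept I w}

theorem le_kappa_of_not_le {u : A} {c : Concept A X I} (h : ¬ objectConcept I u ≤ c) :
    c ≤ kappa I u :=
  le_of_forall_objectConcept_le fun a ha =>
    le_sSup ⟨a, rfl, fun hua => h (hua.trans (objectConcept_le_iff.2 ha))⟩

theorem mem_intent_kappa_iff {u : A} {x : X} :
    x ∈ (kappa I u).intent ↔ ∀ w, ¬ objectConcept I u ≤ objectConcept I w → I w x := by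
  simp only [kappa, Concept.intent_sSup, mem_iInter₂]
  constructor
  · exact fun h w hw => h _ ⟨w, rfl, hw⟩ rfl
  · rintro h _ ⟨w, rfl, hw⟩
    exact (mem_upperPolar_singleton I).2 (h w hw)

end Polarity

section ReflexiveGraph

variable {Z : Type*} {E : Z → Z → Prop} {u : Z}

theorem adj_of_mem_extent_objectConcept (hrefl : ∀ z, E z z) {a : Z}
    (ha : a ∈ (objectConcept (fun a x => ¬ E a x) u).extent) : E u a :=
  not_not.1 fun hua => ha ((mem_upperPolar_singleton _).2 hua) (hrefl a)

theorem adj_of_mem_intent_ofAttribute (hrefl : ∀ z, E z z) {t : Z}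
    (ht : t ∈ (Concept.ofAttribute (fun a x => ¬ E a x) u).intent) : E t u :=
  not_not.1 fun htu => ht ((mem_lowerPolar_singleton _).2 htu) (hrefl t)

theorem exists_adj_of_objectConcept_le_kappa (hrefl : ∀ z, E z z)
    (h : objectConcept _ u ≤ kappa (fun a x => ¬ E a x) u) :
    ∃ w, ¬ objectConcept _ u ≤ objectConcept (fun a x => ¬ E a x) w ∧ E w u := by
  by_contra! hw
  exact Concept.rel_extent_intent (objectConcept_le_iff.1 h) (mem_intent_kappa_iff.2 hw) (hrefl u)

theorem objectConcept_le_sup_ofAttribute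
    (hrefl : ∀ z, E z z) (hanti : ∀ z z' : Z, E z z' → E z' z → z = z')
    {w : Z} (hwu : E w u) :
    objectConcept _ u ≤ objectConcept _ w ⊔ Concept.ofAttribute (fun a x => ¬ E a x) u := by
  rw [objectConcept_le_iff, Concept.extent_sup]
  rintro t ⟨hwt, htu⟩ hut
  obtain rfl := hanti t u (adj_of_mem_intent_ofAttribute hrefl htu) hut
  exact hwt rfl hwu

theorem mem_intent_of_lt_objectConcept
    (hrefl : ∀ z, E z z) (hanti : ∀ z z' : Z, E z z' → E z' z → z = z')
    {c : Concept Z Z (fun a x => ¬ E a x)} (hc : c < objectConcept _ u) : u ∈ c.intent := by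
  rw [← c.upperPolar_extent]
  intro a ha hau
  obtain rfl := hanti a u hau
    (adj_of_mem_extent_objectConcept hrefl (Concept.extent_subset_extent_iff.2 hc.le ha))
  exact hc.not_ge (objectConcept_le_iff.2 ha)

theorem not_objectConcept_le_sup
    (hrefl : ∀ z, E z z) (hanti : ∀ z z' : Z, E z z' → E z' z → z = z')
    {c d : Concept Z Z (fun a x => ¬ E a x)}
    (hc : c < objectConcept _ u) (hd : d < objectConcept _ u) : ¬ objectConcept _ u ≤ c ⊔ d :=
  fun h => Concept.rel_extent_intent (objectConcept_le_iff.1 h)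
    ⟨mem_intent_of_lt_objectConcept hrefl hanti hc,
      mem_intent_of_lt_objectConcept hrefl hanti hd⟩ (hrefl u)

theorem objectConcept_not_le_kappa
    (hrefl : ∀ z, E z z) (hanti : ∀ z z' : Z, E z z' → E z' z → z = z')
    (hdist : ∀ (ι : Type u) (κ : ι → Type v)
      (f : (i : ι) → κ i → Concept Z Z (fun a x => ¬ E a x)),
      ⨅ i, ⨆ j, f i j = ⨆ g : (i : ι) → κ i, ⨅ i, f i (g i)) :
    ¬ objectConcept _ u ≤ kappa (fun a x => ¬ E a x) u := by
  intro hle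
  obtain ⟨w, huw, hwu⟩ := exists_adj_of_objectConcept_le_kappa hrefl hle
  set us := objectConcept (fun a x => ¬ E a x) u
  set ur := Concept.ofAttribute (fun a x => ¬ E a x) u
  set ws := objectConcept (fun a x => ¬ E a x) w
  have hsplit : us ≤ us ⊓ ws ⊔ us ⊓ ur :=
    (le_inf le_rfl (objectConcept_le_sup_ofAttribute hrefl hanti hwu)).trans
      (inf_sup_left_le_of_iInf_iSup_eq hdist us ws ur)
  have hus_ur : ¬ us ≤ ur := fun h => Concept.ofObject_le_ofAttribute_iff.1 h (hrefl u)
  exact not_objectConcept_le_sup hrefl hanti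
    (inf_le_left.lt_of_not_ge fun h => huw (h.trans inf_le_right))
    (inf_le_left.lt_of_not_ge fun h => hus_ur (h.trans inf_le_right)) hsplit

end ReflexiveGraph

/-- If `(Z, E)` is a reflexive, antisymmetric graph whose associated concept lattice
satisfies the completely distributive law, and `κ(u) := ⨆ {w_s | ¬ u_s ≤ w_s}`, then
`κ(u)` is completely meet-irreducible: any set of concepts whose infimum is `κ(u)`
contains `κ(u)`. -/
theorem kappa_completely_meet_irreducible {Z : Type*} (E : Z → Z → Prop)
    (hrefl : Reflexive E)
    (hanti : ∀ z z' : Z, E z z' → E z' z → z = z')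
    (hdist : ∀ (ι : Type u) (κ : ι → Type v)
      (f : (i : ι) → κ i → Concept Z Z (fun a x => ¬ E a x)),
      ⨅ i, ⨆ j, f i j = ⨆ g : (i : ι) → κ i, ⨅ i, f i (g i))
    (u : Z) (S : Set (Concept Z Z (fun a x => ¬ E a x)))
    (hS : sInf S = sSup {d : Concept Z Z (fun a x => ¬ E a x) | ∃ w : Z,
        d = objectConcept (fun a x => ¬ E a x) w ∧
        ¬ objectConcept (fun a x => ¬ E a x) u ≤ objectConcept (fun a x => ¬ E a x) w}) :
    sSup {d : Concept Z Z (fun a x => ¬ E a x) | ∃ w : Z,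
        d = objectConcept (fun a x => ¬ E a x) w ∧
        ¬ objectConcept (fun a x => ¬ E a x) u ≤ objectConcept (fun a x => ¬ E a x) w} ∈ S :=
  mem_of_sInf_eq_of_isGreatest
    ⟨objectConcept_not_le_kappa hrefl hanti hdist, fun _ => le_kappa_of_not_le⟩ hS
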